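/- arXiv:2506.12271 — 2 statements merged into one kernel-verified Lean document; each statement's English description precedes it below -/
import Mathlib

section
/- Let G be an oriented hypergraph and let N be a tail-equivalence class of contributors of G that contains a contributor which is not edge-monic (equivalently, there are distinct vertices v₁ ≠ v₂ with ω(t_{v₁}) = ω(t_{v₂})). Then the sum of csgn(c) over all c ∈ N equals 0. -/
open scoped Classical

noncomputable section

/-- An oriented hypergraph `G = (V, E, I, ς, ω, σ)`: `vtx = ς` assigns each incidence
its vertex, `edg = ω` assigns each incidence its edge, and `sgn = σ` is its sign. -/
structure OHG (V E I : Type*) where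
  vtx : I → V
  edg : I → E
  sgn : I → ℤˣ

variable {V E I : Type*} [Fintype V] [DecidableEq V] [Fintype E] [DecidableEq E]
  [Fintype I] [DecidableEq I]

/-- A contributor `c = (t, h)`: each tail sits at its vertex, tail and head of each
`P₁`-map share an edge, and the head map `v ↦ ς (h v)` is a bijection of `V`. -/
def IsContributor (G : OHG V E I) (c : (V → I) × (V → I)) : Prop :=
  (∀ v, G.vtx (c.1 v) = v) ∧ (∀ v, G.edg (c.1 v) = G.edg (c.2 v)) ∧
    Function.Bijective fun v => G.vtx (c.2 v)

/-- The orbit of `v` under iteration of `f` (for `f` a bijection of a finite type this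
is the full cycle of `v`). -/
def orbitOf (f : V → V) (v : V) : Finset V :=
  Finset.univ.filter fun w => ∃ n : ℕ, f^[n] v = w

/-- The set of orbits of `f`. -/
def orbitsOf (f : V → V) : Finset (Finset V) :=
  Finset.univ.image (orbitOf f)

/-- `bs c`: the number of backsteps of a contributor. -/
def bsC (c : (V → I) × (V → I)) : ℕ :=
  (Finset.univ.filter fun v => c.1 v = c.2 v).card

/-- `ec c`: the number of orbits (components) of even cardinality. -/
def ecC (G : OHG V E I) (c : (V → I) × (V → I)) : ℕ :=
  ((orbitsOf fun v => G.vtx (c.2 v)).filter fun O => Even O.card).card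

/-- A negative orbit: not a single backstep, and the product of the adjacency signs
`-σ(t_v)·σ(h_v)` over the orbit is `-1`. -/
def NegOrbit (G : OHG V E I) (c : (V → I) × (V → I)) (O : Finset V) : Prop :=
  (¬ ∃ v, O = {v} ∧ c.1 v = c.2 v) ∧
    ∏ v ∈ O, (-(G.sgn (c.1 v) * G.sgn (c.2 v))) = (-1 : ℤˣ)

/-- `nc c`: the number of negative orbits (components). -/
def ncC (G : OHG V E I) (c : (V → I) × (V → I)) : ℕ :=
  ((orbitsOf fun v => G.vtx (c.2 v)).filter (NegOrbit G c)).card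

/-- The contributor sign `csgn c = (-1) ^ (ec c + nc c + bs c)`. -/
def csgnC (G : OHG V E I) (c : (V → I) × (V → I)) : ℤ :=
  (-1) ^ (ecC G c + ncC G c + bsC c)

/-- A contributor is edge-monic when its tail edges are pairwise distinct. -/
def EdgeMonic (G : OHG V E I) (c : (V → I) × (V → I)) : Prop :=
  Function.Injective fun v => G.edg (c.1 v)

/-- Tail-equivalence: identical tail maps. -/
def TailEquiv (c c' : (V → I) × (V → I)) : Prop := c.1 = c'.1

/-- Head-equivalence: identical sets of head incidences. -/
def HeadEquiv (c c' : (V → I) × (V → I)) : Prop := Set.range c.2 = Set.range c'.2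

/-!
Swapping the heads of two vertices whose tails lie on a common edge is a sign-reversing
involution of the tail-equivalence class. Writing `csgn c = sign π_c · ∏ -σ(t_v) · ∏ σ(h_v)`
(the even orbits account for `sign π_c`; the negative orbits and the backsteps are exactly the
orbits whose adjacency-sign product is `-1`), the swap keeps the tails, permutes the head
incidences, and composes `π_c` with a transposition.
-/

open Finset Equiv

theorem prod_intUnits_eq_neg_one_pow {α : Type*} (s : Finset α) (u : α → ℤˣ) :
    ∏ x ∈ s, u x = (-1) ^ #(s.filter fun x => u x = -1) := by
  rw [← prod_const, prod_filter]
  refine prod_congr rfl fun x _ => ?_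
  rcases Int.units_eq_one_or (u x) with h | h <;> simp [h]

section Orbits

variable {α : Type*} [Fintype α] (π : Perm α)

theorem mem_orbitOf_iff_sameCycle {a w : α} : w ∈ orbitOf π a ↔ π.SameCycle a w := by
  simp only [orbitOf, mem_filter, mem_univ, true_and]
  constructor
  · rintro ⟨n, rfl⟩
    exact ⟨n, by rw [zpow_natCast, Perm.coe_pow]⟩
  · intro h
    obtain ⟨n, hn⟩ := h.exists_nat_pow_eq
    exact ⟨n, by rw [← Perm.coe_pow, hn]⟩

theorem orbitOf_eq_orbitOf_iff {a b : α} : orbitOf π a = orbitOf π b ↔ π.SameCycle a b := by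
  refine ⟨fun h => ?_, fun h => ?_⟩
  · rw [← mem_orbitOf_iff_sameCycle, h, mem_orbitOf_iff_sameCycle]
  · ext w
    simp only [mem_orbitOf_iff_sameCycle]
    exact ⟨h.symm.trans, h.trans⟩

theorem orbitOf_eq_singleton {f : α → α} {a : α} (h : f a = a) : orbitOf f a = {a} := by
  ext w
  simp only [orbitOf, mem_filter, mem_univ, true_and, mem_singleton, Function.iterate_fixed h]
  exact ⟨fun ⟨_, hw⟩ => hw.symm, fun hw => ⟨0, hw.symm⟩⟩

theorem nonempty_of_mem_orbitsOf [DecidableEq α] {f : α → α} {O : Finset α}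
    (hO : O ∈ orbitsOf f) : O.Nonempty := by
  obtain ⟨a, -, rfl⟩ := mem_image.1 hO
  exact ⟨a, mem_filter.2 ⟨mem_univ a, 0, rfl⟩⟩

theorem prod_orbitsOf [DecidableEq α] {M : Type*} [CommMonoid M] (g : α → M) :
    ∏ O ∈ orbitsOf π, ∏ v ∈ O, g v = ∏ v, g v :=
  prod_image' g fun a _ => by
    congr 1
    ext w
    simp [orbitOf_eq_orbitOf_iff, mem_orbitOf_iff_sameCycle, Perm.sameCycle_comm]

theorem support_cycleOf_eq_orbitOf [DecidableEq α] {a : α} (ha : π a ≠ a) :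
    (π.cycleOf a).support = orbitOf π a := by
  ext w
  rw [Perm.mem_support_cycleOf_iff' ha, mem_orbitOf_iff_sameCycle]

theorem image_support_cycleFactorsFinset [DecidableEq α] :
    π.cycleFactorsFinset.image Perm.support = (orbitsOf π).filter fun O => 2 ≤ #O := by
  ext O
  simp only [mem_image, mem_filter, orbitsOf, mem_univ, true_and]
  constructor
  · rintro ⟨c, hc, rfl⟩
    have hcyc := (Perm.mem_cycleFactorsFinset_iff.1 hc).1
    obtain ⟨a, ha⟩ := hcyc.nonempty_support
    have hπa : π a ≠ a := Perm.mem_support.1 (Perm.mem_cycleFactorsFinset_support_le hc ha)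
    refine ⟨⟨a, ?_⟩, hcyc.two_le_card_support⟩
    rw [Perm.cycle_is_cycleOf ha hc, support_cycleOf_eq_orbitOf π hπa]
  · rintro ⟨⟨a, rfl⟩, hcard⟩
    have hπa : π a ≠ a := by
      intro h
      rw [orbitOf_eq_singleton h, card_singleton] at hcard
      omega
    exact ⟨π.cycleOf a, Perm.cycleOf_mem_cycleFactorsFinset_iff.2 (Perm.mem_support.2 hπa),
      support_cycleOf_eq_orbitOf π hπa⟩

theorem injOn_support_cycleFactorsFinset [DecidableEq α] :
    Set.InjOn Perm.support (π.cycleFactorsFinset : Set (Perm α)) := by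
  intro c hc d hd hcd
  obtain ⟨a, ha⟩ := (Perm.mem_cycleFactorsFinset_iff.1 hc).1.nonempty_support
  rw [Perm.cycle_is_cycleOf ha hc, Perm.cycle_is_cycleOf (hcd ▸ ha) hd]

theorem sign_eq_neg_one_pow_card_even_orbitsOf [DecidableEq α] :
    Perm.sign π = (-1) ^ #((orbitsOf π).filter fun O => Even #O) := by
  have hnontrivial : ∀ O ∈ orbitsOf π, -(-1 : ℤˣ) ^ #O ≠ 1 → 2 ≤ #O := by
    intro O hO h
    have := (nonempty_of_mem_orbitsOf hO).card_pos
    by_contra! hlt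
    rw [show #O = 1 by omega] at h
    exact h (by simp)
  calc Perm.sign π
      = ∏ c ∈ π.cycleFactorsFinset, -(-1 : ℤˣ) ^ #c.support := by
        rw [Perm.sign_of_cycleType', Perm.cycleType_def, Multiset.map_map]; rfl
    _ = ∏ O ∈ (orbitsOf π).filter fun O => 2 ≤ #O, -(-1 : ℤˣ) ^ #O := by
        rw [← image_support_cycleFactorsFinset,
          prod_image (injOn_support_cycleFactorsFinset π)]
    _ = ∏ O ∈ orbitsOf π, -(-1 : ℤˣ) ^ #O := prod_filter_of_ne hnontrivial
    _ = (-1) ^ #((orbitsOf π).filter fun O => Even #O) := by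
        rw [prod_intUnits_eq_neg_one_pow]
        congr 2
        ext O
        simp [neg_one_pow_eq_one_iff_even]

end Orbits

section SwapHeads

omit [Fintype V] [Fintype E] [DecidableEq E] [Fintype I] [DecidableEq I]

def swapHeads (c : (V → I) × (V → I)) (v₁ v₂ : V) : (V → I) × (V → I) :=
  (c.1, c.2 ∘ Equiv.swap v₁ v₂)

variable {G : OHG V E I} {c : (V → I) × (V → I)} {v₁ v₂ : V}

theorem IsContributor.swapHeads (hc : IsContributor G c)
    (hedge : G.edg (c.1 v₁) = G.edg (c.1 v₂)) : IsContributor G (swapHeads c v₁ v₂) := by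
  refine ⟨hc.1, fun v => ?_, hc.2.2.comp (Equiv.swap v₁ v₂).bijective⟩
  change G.edg (c.1 v) = G.edg (c.2 (Equiv.swap v₁ v₂ v))
  rw [← hc.2.1]
  exact (Equiv.apply_swap_eq_self (v := G.edg ∘ c.1) hedge v).symm

theorem swapHeads_swapHeads (c : (V → I) × (V → I)) (v₁ v₂ : V) :
    swapHeads (swapHeads c v₁ v₂) v₁ v₂ = c :=
  Prod.ext rfl (funext fun v => by simp [swapHeads])

theorem swapHeads_ne (hinj : Function.Injective c.2) (hv : v₁ ≠ v₂) : swapHeads c v₁ v₂ ≠ c := by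
  intro h
  have : c.2 v₂ = c.2 v₁ := by
    simpa [swapHeads] using congrFun (congrArg Prod.snd h) v₁
  exact hv (hinj this).symm

end SwapHeads

section ContributorSign

omit [Fintype E] [DecidableEq E] [Fintype I]

variable (G : OHG V E I) (c : (V → I) × (V → I)) {v₁ v₂ : V}

theorem prod_neg_sgn_eq_neg_one_iff (O : Finset V) :
    ∏ v ∈ O, -(G.sgn (c.1 v) * G.sgn (c.2 v)) = -1 ↔
      NegOrbit G c O ∨ ∃ v, O = {v} ∧ c.1 v = c.2 v := by
  by_cases hbs : ∃ v, O = {v} ∧ c.1 v = c.2 v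
  · obtain ⟨v, rfl, hv⟩ := hbs
    exact iff_of_true (by simp [hv]) (Or.inr ⟨v, rfl, hv⟩)
  · simp only [NegOrbit, hbs, not_false_eq_true, true_and, or_false]

variable {G c}

theorem card_filter_backstep_orbitsOf (ht : ∀ v, G.vtx (c.1 v) = v) :
    #((orbitsOf fun v => G.vtx (c.2 v)).filter fun O => ∃ v, O = {v} ∧ c.1 v = c.2 v) =
      bsC c := by
  rw [bsC, ← card_image_of_injective (univ.filter fun v => c.1 v = c.2 v) singleton_injective]
  refine congrArg card (Finset.ext fun O => ?_)
  simp only [mem_filter, mem_image, mem_univ, true_and, orbitsOf]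
  constructor
  · rintro ⟨-, v, rfl, hv⟩
    exact ⟨v, hv, rfl⟩
  · rintro ⟨v, hv, rfl⟩
    refine ⟨⟨v, orbitOf_eq_singleton ?_⟩, v, rfl, hv⟩
    rw [← hv, ht]

theorem prod_neg_sgn_eq_neg_one_pow (ht : ∀ v, G.vtx (c.1 v) = v) (π : Perm V)
    (hπ : ⇑π = fun v => G.vtx (c.2 v)) :
    ∏ v, -(G.sgn (c.1 v) * G.sgn (c.2 v)) = (-1) ^ (ncC G c + bsC c) := by
  have hdisj : Disjoint ((orbitsOf π).filter (NegOrbit G c))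
      ((orbitsOf π).filter fun O => ∃ v, O = {v} ∧ c.1 v = c.2 v) :=
    disjoint_filter.2 fun _ _ h => h.1
  rw [← prod_orbitsOf π, prod_intUnits_eq_neg_one_pow,
    filter_congr fun O _ => prod_neg_sgn_eq_neg_one_iff G c O, filter_or,
    card_union_of_disjoint hdisj, ncC, ← card_filter_backstep_orbitsOf ht, hπ]

theorem csgnC_eq_sign_mul_prod (ht : ∀ v, G.vtx (c.1 v) = v) (π : Perm V)
    (hπ : ⇑π = fun v => G.vtx (c.2 v)) :
    csgnC G c = ↑(Perm.sign π * ((∏ v, -G.sgn (c.1 v)) * ∏ v, G.sgn (c.2 v))) := by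
  have hec : ecC G c = #((orbitsOf π).filter fun O => Even #O) := by rw [ecC, hπ]
  calc csgnC G c = ↑((-1 : ℤˣ) ^ ecC G c * (-1) ^ (ncC G c + bsC c)) := by
        rw [csgnC, add_assoc, pow_add]
        push_cast
        rfl
    _ = _ := by
        rw [hec, ← sign_eq_neg_one_pow_card_even_orbitsOf, ← prod_neg_sgn_eq_neg_one_pow ht π hπ,
          ← prod_mul_distrib]
        simp only [neg_mul]

theorem csgnC_swapHeads (hc : IsContributor G c) (hv : v₁ ≠ v₂) :
    csgnC G (swapHeads c v₁ v₂) = -csgnC G c := by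
  set π : Perm V := Equiv.ofBijective _ hc.2.2
  rw [csgnC_eq_sign_mul_prod (c := swapHeads c v₁ v₂) hc.1 (π * Equiv.swap v₁ v₂) rfl,
    csgnC_eq_sign_mul_prod hc.1 π rfl]
  simp only [swapHeads, Function.comp_apply, map_mul, Perm.sign_swap hv,
    Equiv.prod_comp (Equiv.swap v₁ v₂) fun v => G.sgn (c.2 v)]
  push_cast
  ring

end ContributorSign

theorem sum_csgn_tailEquiv_class_of_not_edgeMonic_general (G : OHG V E I)
    (c₀ : (V → I) × (V → I)) (hne : ¬ EdgeMonic G c₀) :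
    ∑ c ∈ Finset.univ.filter (fun c => IsContributor G c ∧ TailEquiv c c₀),
      csgnC G c = 0 := by
  obtain ⟨v₁, v₂, hedge, hv⟩ := Function.not_injective_iff.1 hne
  have hmem : ∀ c ∈ univ.filter (fun c => IsContributor G c ∧ TailEquiv c c₀),
      IsContributor G c ∧ c.1 = c₀.1 := fun c hc => (mem_filter.1 hc).2
  refine sum_involution (fun c _ => swapHeads c v₁ v₂)
    (fun c hc => by rw [csgnC_swapHeads (hmem c hc).1 hv, add_neg_cancel])
    (fun c hc _ => swapHeads_ne (hmem c hc).1.2.2.1.of_comp hv)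
    (fun c hc => mem_filter.2 ⟨mem_univ _, ?_, (hmem c hc).2⟩)
    (fun c _ => swapHeads_swapHeads c v₁ v₂)
  obtain ⟨hc, htail⟩ := hmem c hc
  exact hc.swapHeads (by rwa [htail])

/-- If a tail-equivalence class of contributors of an oriented
hypergraph `G` contains a contributor that is not edge-monic, then the sum of `csgn`
over the class is `0`. -/
theorem sum_csgn_tailEquiv_class_of_not_edgeMonic (G : OHG V E I)
    (c₀ : (V → I) × (V → I)) (h₀ : IsContributor G c₀) (hne : ¬ EdgeMonic G c₀) :
    ∑ c ∈ Finset.univ.filter (fun c => IsContributor G c ∧ TailEquiv c c₀),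
      csgnC G c = 0 :=
  sum_csgn_tailEquiv_class_of_not_edgeMonic_general G c₀ hne
end
end

section
/- Let G be an oriented hypergraph. For a contributor c of G, define its reversal c̄ by c̄(w) = (h_{π_c⁻¹(w)}, t_{π_c⁻¹(w)}). Then c̄ is a contributor of G with π_{c̄} = π_c⁻¹, reversal is an involution on the set of contributors of G, and two contributors c, c′ are head-equivalent if and only if c̄, c̄′ are tail-equivalent. Consequently, reversal maps the set of tail-equivalence classes bijectively onto the set of head-equivalence classes, with each contributor's associated permutation replaced by its inverse. -/
open scoped Classical

noncomputable section

variable {V E I : Type*} [Fintype V] [DecidableEq V] [Fintype E] [DecidableEq E]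
  [Fintype I] [DecidableEq I]

/-- The inverse of a function `f : V → V` (agreeing with `f⁻¹` when `f` is bijective). -/
noncomputable def invOf (f : V → V) : V → V :=
  fun w => if h : ∃ v, f v = w then Classical.choose h else w

/-- The reversal `c̄` of a contributor `c`, given by
`c̄ w = (h (π⁻¹ w), t (π⁻¹ w))` where `π` is the head map of `c`. -/
noncomputable def revC (G : OHG V E I) (c : (V → I) × (V → I)) : (V → I) × (V → I) :=
  (fun w => c.2 (invOf (fun v => G.vtx (c.2 v)) w),
   fun w => c.1 (invOf (fun v => G.vtx (c.2 v)) w))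

/-!
Every tail of a contributor `c` sits at its own vertex, so the head map of `c̄` is `π_c⁻¹` and
reversing twice gives back `c`. Since `π_c` is a bijection, `c` has exactly one head incidence at
each vertex, and `c̄` takes it as its tail there: the tail map of `c̄` is determined by the set of
heads of `c`, and its range is that set. Hence `c, c'` are head-equivalent iff `c̄, c̄'` are
tail-equivalent, and the involution `c ↦ c̄` carries tail-classes onto head-classes and back.
-/

theorem image_setOf_and_of_involution {α : Type*} {r : α → α} {p q : α → Prop}
    (hp : ∀ a, p a → p (r a)) (hr : ∀ a, p a → r (r a) = a) :
    r '' {a | p a ∧ q a} = {a | p a ∧ q (r a)} := by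
  ext b
  constructor
  · rintro ⟨a, ⟨hpa, hqa⟩, rfl⟩
    exact ⟨hp a hpa, by rwa [hr a hpa]⟩
  · rintro ⟨hpb, hqb⟩
    exact ⟨r b, ⟨hp b hpb, hqb⟩, hr b hpb⟩

section Reversal

variable {V E I : Type*}

def headMap (G : OHG V E I) (c : (V → I) × (V → I)) : V → V := fun v => G.vtx (c.2 v)

theorem IsContributor.headMap_bijective {G : OHG V E I} {c : (V → I) × (V → I)}
    (hc : IsContributor G c) : Function.Bijective (headMap G c) :=
  hc.2.2

variable [Fintype V] [DecidableEq V]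

section InvOf

variable {f : V → V}

theorem apply_invOf (hf : Function.Surjective f) (w : V) : f (invOf f w) = w := by
  have h : ∃ v, f v = w := hf w
  simp only [invOf, dif_pos h]
  exact Classical.choose_spec h

theorem invOf_apply (hf : Function.Injective f) (v : V) : invOf f (f v) = v := by
  have h : ∃ u, f u = f v := ⟨v, rfl⟩
  simp only [invOf, dif_pos h]
  exact hf (Classical.choose_spec h)

theorem invOf_injective (hf : Function.Surjective f) : Function.Injective (invOf f) :=
  Function.LeftInverse.injective (apply_invOf hf)

theorem invOf_surjective (hf : Function.Injective f) : Function.Surjective (invOf f) :=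
  Function.LeftInverse.surjective (invOf_apply hf)

theorem invOf_bijective (hf : Function.Bijective f) : Function.Bijective (invOf f) :=
  ⟨invOf_injective hf.2, invOf_surjective hf.1⟩

theorem invOf_invOf_of_bijective (hf : Function.Bijective f) : invOf (invOf f) = f :=
  funext fun w => invOf_injective hf.2 <| by
    rw [apply_invOf (invOf_surjective hf.1), invOf_apply hf.1]

end InvOf

variable {G : OHG V E I} {c c' c₀ : (V → I) × (V → I)}

theorem revC_eq_comp : revC G c = (c.2 ∘ invOf (headMap G c), c.1 ∘ invOf (headMap G c)) := rfl

theorem headMap_revC (ht : ∀ v, G.vtx (c.1 v) = v) :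
    headMap G (revC G c) = invOf (headMap G c) :=
  funext fun _ => ht _

theorem IsContributor.revC (hc : IsContributor G c) : IsContributor G (revC G c) :=
  ⟨apply_invOf hc.headMap_bijective.2, fun _ => (hc.2.1 _).symm,
    show Function.Bijective (headMap G _) from
      headMap_revC hc.1 ▸ invOf_bijective hc.headMap_bijective⟩

theorem revC_revC (hc : IsContributor G c) : revC G (revC G c) = c := by
  have hπ : invOf (headMap G (revC G c)) = headMap G c := by
    rw [headMap_revC hc.1, invOf_invOf_of_bijective hc.headMap_bijective]
  rw [revC_eq_comp (c := revC G c), hπ, revC_eq_comp]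
  ext v
  · exact congrArg c.1 (invOf_apply hc.headMap_bijective.1 v)
  · exact congrArg c.2 (invOf_apply hc.headMap_bijective.1 v)

theorem range_revC_fst (hπ : Function.Injective (headMap G c)) :
    Set.range (revC G c).1 = Set.range c.2 :=
  (invOf_surjective hπ).range_comp c.2

theorem revC_fst_vtx_of_mem_range (hπ : Function.Injective (headMap G c)) {h : I}
    (hh : h ∈ Set.range c.2) : (revC G c).1 (G.vtx h) = h := by
  obtain ⟨v, rfl⟩ := hh
  exact congrArg c.2 (invOf_apply hπ v)

theorem headEquiv_iff_tailEquiv_revC (hc : IsContributor G c) (hc' : IsContributor G c') :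
    HeadEquiv c c' ↔ TailEquiv (revC G c) (revC G c') := by
  constructor
  · intro h
    funext w
    have hmem : (revC G c).1 w ∈ Set.range c'.2 := h ▸ ⟨_, rfl⟩
    calc (revC G c).1 w = (revC G c').1 (G.vtx ((revC G c).1 w)) :=
          (revC_fst_vtx_of_mem_range hc'.headMap_bijective.1 hmem).symm
      _ = (revC G c').1 w := by rw [hc.revC.1 w]
  · intro h
    rw [HeadEquiv, ← range_revC_fst hc.headMap_bijective.1,
      ← range_revC_fst hc'.headMap_bijective.1]
    exact congrArg Set.range h

theorem tailEquiv_revC_iff (hc : IsContributor G c) (hc' : IsContributor G c') :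
    TailEquiv (revC G c) c' ↔ HeadEquiv c (revC G c') := by
  rw [headEquiv_iff_tailEquiv_revC hc hc'.revC, revC_revC hc']

theorem headEquiv_revC_iff (hc : IsContributor G c) (hc' : IsContributor G c') :
    HeadEquiv (revC G c) c' ↔ TailEquiv c (revC G c') := by
  rw [headEquiv_iff_tailEquiv_revC hc.revC hc', revC_revC hc]

def tailClass (G : OHG V E I) (c₀ : (V → I) × (V → I)) : Set ((V → I) × (V → I)) :=
  {c | IsContributor G c ∧ TailEquiv c c₀}

def headClass (G : OHG V E I) (c₀ : (V → I) × (V → I)) : Set ((V → I) × (V → I)) :=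
  {c | IsContributor G c ∧ HeadEquiv c c₀}

theorem image_revC_tailClass (hc₀ : IsContributor G c₀) :
    revC G '' tailClass G c₀ = headClass G (revC G c₀) := by
  rw [tailClass, image_setOf_and_of_involution (fun _ => IsContributor.revC) fun _ => revC_revC]
  exact Set.ext fun _ => and_congr_right fun hd => tailEquiv_revC_iff hd hc₀

theorem image_revC_headClass (hc₀ : IsContributor G c₀) :
    revC G '' headClass G c₀ = tailClass G (revC G c₀) := by
  rw [headClass, image_setOf_and_of_involution (fun _ => IsContributor.revC) fun _ => revC_revC]
  exact Set.ext fun _ => and_congr_right fun hd => headEquiv_revC_iff hd hc₀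

theorem image_revC_image_revC {N : Set ((V → I) × (V → I))}
    (hN : ∀ c ∈ N, IsContributor G c) : revC G '' (revC G '' N) = N :=
  Set.LeftInvOn.image_image fun c hc => revC_revC (hN c hc)

end Reversal

/-- Reversal sends contributors to contributors, with associated
permutation the inverse of the original one; it is an involution on contributors; two
contributors are head-equivalent iff their reversals are tail-equivalent; and
consequently taking images under reversal is a bijection from the set of
tail-equivalence classes onto the set of head-equivalence classes. -/
theorem revC_properties (G : OHG V E I) :
    (∀ c, IsContributor G c → IsContributor G (revC G c)) ∧
    (∀ c, IsContributor G c →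
      (fun w => G.vtx ((revC G c).2 w)) = invOf fun v => G.vtx (c.2 v)) ∧
    (∀ c, IsContributor G c → revC G (revC G c) = c) ∧
    (∀ c c', IsContributor G c → IsContributor G c' →
      (HeadEquiv c c' ↔ TailEquiv (revC G c) (revC G c'))) ∧
    Set.BijOn (Set.image (revC G))
      {N | ∃ c₀, IsContributor G c₀ ∧ N = {c | IsContributor G c ∧ TailEquiv c c₀}}
      {N | ∃ c₀, IsContributor G c₀ ∧ N = {c | IsContributor G c ∧ HeadEquiv c c₀}} := by
  refine ⟨fun _ => IsContributor.revC, fun _ hc => headMap_revC hc.1, fun _ => revC_revC,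
    fun _ _ => headEquiv_iff_tailEquiv_revC,
    Set.InvOn.bijOn (f' := Set.image (revC G)) ⟨?_, ?_⟩ ?_ ?_⟩
  · rintro _ ⟨_, -, rfl⟩
    exact image_revC_image_revC fun _ hc => hc.1
  · rintro _ ⟨_, -, rfl⟩
    exact image_revC_image_revC fun _ hc => hc.1
  · rintro _ ⟨c₀, hc₀, rfl⟩
    exact ⟨revC G c₀, hc₀.revC, image_revC_tailClass hc₀⟩
  · rintro _ ⟨c₀, hc₀, rfl⟩
    exact ⟨revC G c₀, hc₀.revC, image_revC_headClass hc₀⟩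
end
end
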